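/- arXiv:2210.09133 — 5 statements merged into one kernel-verified Lean document; each statement's English description precedes it below -/
import Mathlib

section
/- Let Ω be a Polish space and U : C_b(Ω) → ℝ a monotone functional (f ≤ g pointwise implies U(f) ≤ U(g)). If U is lower semicontinuous with respect to the topology of uniform convergence on compact subsets of Ω restricted to uniformly bounded sets (i.e., U(f) ≤ liminf U(f_n) whenever (f_n) is uniformly bounded and f_n → f uniformly on compacts), then U is continuous from below: for every sequence (f_n) ⊆ C_b(Ω) with f_n ≤ f_{n+1} pointwise and f_n → f ∈ C_b(Ω) pointwise, one has U(f) = lim_{n→∞} U(f_n). -/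
open Filter Topology

lemma dini_aux {Ω : Type*} [TopologicalSpace Ω] {K : Set Ω} (hK : IsCompact K)
    {f : ℕ → Ω → ℝ} {g : Ω → ℝ} (hfc : ∀ n, Continuous (f n)) (hgc : Continuous g)
    (hmono : ∀ n x, f n x ≤ f (n + 1) x)
    (hlim : ∀ x, Tendsto (fun n => f n x) atTop (𝓝 (g x))) :
    TendstoUniformlyOn f g atTop K := by
  have hmono' : ∀ x, Monotone fun n => f n x :=
    fun x => monotone_nat_of_le_succ fun n => hmono n x
  have hle : ∀ n x, f n x ≤ g x := fun n x => (hmono' x).ge_of_tendsto (hlim x) n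
  rw [Metric.tendstoUniformlyOn_iff]
  intro ε hε
  set V : ℕ → Set Ω := fun n => {x | g x - f n x < ε} with hV
  have hVopen : ∀ n, IsOpen (V n) := fun n => isOpen_lt (hgc.sub (hfc n)) continuous_const
  have hVmono : Monotone V := monotone_nat_of_le_succ fun n x hx => by
    have := hmono n x
    simp only [hV, Set.mem_setOf_eq] at hx ⊢
    linarith
  have hcover : K ⊆ ⋃ n, V n := by
    intro x _
    obtain ⟨n, hn⟩ := ((hlim x).eventually (eventually_gt_nhds
      (show g x - ε < g x by linarith))).exists
    exact Set.mem_iUnion.2 ⟨n, by simp only [hV, Set.mem_setOf_eq]; linarith⟩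
  obtain ⟨t, ht⟩ := hK.elim_finite_subcover V hVopen hcover
  have hKN : K ⊆ V (t.sup id) := by
    intro x hx
    obtain ⟨i, hi, hxi⟩ := Set.mem_iUnion₂.1 (ht hx)
    exact hVmono (Finset.le_sup (f := id) hi) hxi
  filter_upwards [eventually_ge_atTop (t.sup id)] with n hn x hx
  have h1 : g x - f n x < ε := by
    have := hKN hx
    simp only [hV, Set.mem_setOf_eq] at this
    have := hmono' x hn
    linarith
  have h2 := hle n x
  rw [Real.dist_eq]
  rw [abs_lt]
  constructor <;> linarith

theorem continuous_from_below_of_lsc_mixed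
    {Ω : Type*} [TopologicalSpace Ω] [PolishSpace Ω]
    (U : BoundedContinuousFunction Ω ℝ → ℝ)
    (hmono : ∀ f g : BoundedContinuousFunction Ω ℝ, (∀ x, f x ≤ g x) → U f ≤ U g)
    (hlsc : ∀ (f : ℕ → BoundedContinuousFunction Ω ℝ)
        (g : BoundedContinuousFunction Ω ℝ),
        (∃ C : ℝ, ∀ n, ‖f n‖ ≤ C) →
        (∀ K : Set Ω, IsCompact K →
          TendstoUniformlyOn (fun n x => f n x) (fun x => g x) atTop K) →
        U g ≤ liminf (fun n => U (f n)) atTop) :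
    ∀ (f : ℕ → BoundedContinuousFunction Ω ℝ) (g : BoundedContinuousFunction Ω ℝ),
      (∀ n x, f n x ≤ f (n + 1) x) →
      (∀ x, Tendsto (fun n => f n x) atTop (𝓝 (g x))) →
      Tendsto (fun n => U (f n)) atTop (𝓝 (U g)) := by
  intro f g hm hlim
  have hmx : ∀ x, Monotone fun n => f n x :=
    fun x => monotone_nat_of_le_succ fun n => hm n x
  have hle : ∀ n x, f n x ≤ g x := fun n x => (hmx x).ge_of_tendsto (hlim x) n
  have hUmono : Monotone fun n => U (f n) :=
    monotone_nat_of_le_succ fun n => hmono _ _ (hm n)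
  have hUle : ∀ n, U (f n) ≤ U g := fun n => hmono _ _ (hle n)
  have hbdd : BddAbove (Set.range fun n => U (f n)) :=
    ⟨U g, by rintro _ ⟨n, rfl⟩; exact hUle n⟩
  have htend : Tendsto (fun n => U (f n)) atTop (𝓝 (⨆ n, U (f n))) :=
    tendsto_atTop_ciSup hUmono hbdd
  have hbd : ∃ C : ℝ, ∀ n, ‖f n‖ ≤ C := by
    refine ⟨max ‖f 0‖ ‖g‖, fun n => ?_⟩
    apply (BoundedContinuousFunction.norm_le (le_trans (norm_nonneg _) (le_max_left _ _))).2
    intro x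
    have h0 : |f 0 x| ≤ ‖f 0‖ := (f 0).norm_coe_le_norm x
    have hgx : |g x| ≤ ‖g‖ := g.norm_coe_le_norm x
    have h1 : f 0 x ≤ f n x := hmx x (Nat.zero_le n)
    have h2 := hle n x
    rw [Real.norm_eq_abs, abs_le]
    rw [abs_le] at h0 hgx
    constructor
    · have := le_max_left ‖f 0‖ ‖g‖; linarith
    · have := le_max_right ‖f 0‖ ‖g‖; linarith
  have hdini : ∀ K : Set Ω, IsCompact K →
      TendstoUniformlyOn (fun n x => f n x) (fun x => g x) atTop K :=
    fun K hK => dini_aux hK (fun n => (f n).continuous) g.continuous hm hlim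
  have h2 := hlsc f g hbd hdini
  rw [htend.liminf_eq] at h2
  have : (⨆ n, U (f n)) = U g := le_antisymm (ciSup_le hUle) h2
  rwa [this] at htend
end

section
/- Let Ω be a Polish space and U : C_b(Ω) → ℝ monotone and continuous from below. Then U is sequentially lower semicontinuous along uniformly bounded sequences converging uniformly on compacts: if (f_n) ⊆ C_b(Ω) is uniformly bounded and f_n → f ∈ C_b(Ω) uniformly on every compact subset of Ω, then U(f) ≤ liminf_{n→∞} U(f_n). -/
open Filter Topology Metric

theorem lsc_mixed_of_continuous_from_below
    {Ω : Type*} [TopologicalSpace Ω] [PolishSpace Ω]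
    (U : BoundedContinuousFunction Ω ℝ → ℝ)
    (hmono : ∀ f g : BoundedContinuousFunction Ω ℝ, (∀ x, f x ≤ g x) → U f ≤ U g)
    (hbelow : ∀ (f : ℕ → BoundedContinuousFunction Ω ℝ)
        (g : BoundedContinuousFunction Ω ℝ),
        (∀ n x, f n x ≤ f (n + 1) x) →
        (∀ x, Tendsto (fun n => f n x) atTop (𝓝 (g x))) →
        Tendsto (fun n => U (f n)) atTop (𝓝 (U g)))
    (f : ℕ → BoundedContinuousFunction Ω ℝ) (g : BoundedContinuousFunction Ω ℝ)
    (hbdd : ∃ C : ℝ, ∀ n, ‖f n‖ ≤ C)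
    (hconv : ∀ K : Set Ω, IsCompact K →
      TendstoUniformlyOn (fun n x => f n x) (fun x => g x) atTop K) :
    U g ≤ liminf (fun n => U (f n)) atTop := by
  rcases isEmpty_or_nonempty Ω with hΩ | hΩ
  · have hfg : ∀ n, f n = g := fun n =>
      BoundedContinuousFunction.ext fun x => (IsEmpty.false x).elim
    simp only [hfg]
    exact (Filter.liminf_const (U g)).ge
  obtain ⟨C₀, hC₀⟩ := hbdd
  letI := TopologicalSpace.upgradeIsCompletelyMetrizable Ω
  have habs : ∀ n x, |f n x| ≤ C₀ := fun n x => by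
    have h := ((f n).norm_coe_le_norm x).trans (hC₀ n)
    rwa [Real.norm_eq_abs] at h
  have hflb : ∀ n x, -C₀ ≤ f n x := fun n x => (abs_le.1 (habs n x)).1
  have hfub : ∀ n x, f n x ≤ C₀ := fun n x => (abs_le.1 (habs n x)).2
  have cobdd : IsCoboundedUnder (· ≥ ·) atTop (fun n => U (f n)) := by
    refine Filter.IsBoundedUnder.isCoboundedUnder_ge
      (isBoundedUnder_of ⟨U (BoundedContinuousFunction.const Ω C₀), fun n => ?_⟩)
    exact hmono _ _ fun x => by simpa using hfub n x
  -- dense sequence and bump functions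
  set e : ℕ → Ω := TopologicalSpace.denseSeq Ω with he
  have hedense : DenseRange e := TopologicalSpace.denseRange_denseSeq Ω
  set S : ℕ → Set Ω := fun N => e '' Set.Iic N with hS
  have hSne : ∀ N, (S N).Nonempty := fun N => ⟨e 0, ⟨0, Set.mem_Iic.2 (Nat.zero_le N), rfl⟩⟩
  have hSfin : ∀ N, (S N).Finite := fun N => (Set.finite_Iic N).image e
  have hSsub : ∀ N, S N ⊆ S (N + 1) :=
    fun N => Set.image_mono (Set.Iic_subset_Iic.2 (Nat.le_succ N))
  have hcont : ∀ k N : ℕ,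
      Continuous fun x : Ω => min 1 (max 0 (2 - (2 * ((k : ℝ) + 1)) * infDist x (S N))) :=
    fun k N => (continuous_const.min
      (continuous_const.max (continuous_const.sub
        (continuous_const.mul (continuous_infDist_pt (S N))))))
  have hval : ∀ (k N : ℕ) (x : Ω),
      ‖min 1 (max 0 (2 - (2 * ((k : ℝ) + 1)) * infDist x (S N)))‖ ≤ 1 := by
    intro k N x
    rw [Real.norm_eq_abs, abs_le]
    constructor
    · have : (0:ℝ) ≤ min 1 (max 0 (2 - (2 * ((k : ℝ) + 1)) * infDist x (S N))) :=
        le_min zero_le_one (le_max_left _ _)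
      linarith
    · exact min_le_left _ _
  set u : ℕ → ℕ → BoundedContinuousFunction Ω ℝ := fun k N =>
    BoundedContinuousFunction.ofNormedAddCommGroup
      (fun x => min 1 (max 0 (2 - (2 * ((k : ℝ) + 1)) * infDist x (S N))))
      (hcont k N) 1 (hval k N) with hu
  have huval : ∀ (k N : ℕ) (x : Ω),
      u k N x = min 1 (max 0 (2 - (2 * ((k : ℝ) + 1)) * infDist x (S N))) := fun _ _ _ => rfl
  have hu01 : ∀ (k N : ℕ) (x : Ω), 0 ≤ u k N x ∧ u k N x ≤ 1 := by
    intro k N x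
    rw [huval]
    exact ⟨le_min zero_le_one (le_max_left _ _), min_le_left _ _⟩
  have humono : ∀ (k N : ℕ) (x : Ω), u k N x ≤ u k (N + 1) x := by
    intro k N x
    rw [huval, huval]
    have h1 : infDist x (S (N + 1)) ≤ infDist x (S N) :=
      infDist_le_infDist_of_subset (hSsub N) (hSne N)
    have h2 : (0:ℝ) ≤ 2 * ((k : ℝ) + 1) := by positivity
    have h3 : (2 * ((k : ℝ) + 1)) * infDist x (S (N + 1))
        ≤ (2 * ((k : ℝ) + 1)) * infDist x (S N) := by nlinarith
    exact min_le_min le_rfl (max_le_max le_rfl (by linarith))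
  have huone : ∀ (k : ℕ) (x : Ω), ∀ᶠ N in atTop, u k N x = 1 := by
    intro k x
    obtain ⟨i, hi⟩ := Metric.denseRange_iff.1 hedense x (1 / (2 * ((k : ℝ) + 1))) (by positivity)
    filter_upwards [eventually_ge_atTop i] with N hN
    rw [huval]
    have h1 : infDist x (S N) ≤ dist x (e i) :=
      infDist_le_dist_of_mem ⟨i, Set.mem_Iic.2 hN, rfl⟩
    have hk : (0:ℝ) < 2 * ((k : ℝ) + 1) := by positivity
    have h2 : (2 * ((k : ℝ) + 1)) * infDist x (S N) < 1 := by
      have h := mul_lt_mul_of_pos_left (lt_of_le_of_lt h1 hi) hk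
      rwa [mul_one_div, div_self (ne_of_gt hk)] at h
    rw [max_eq_right (by linarith), min_eq_left (by linarith)]
  have hupos : ∀ (k N : ℕ) (x : Ω), (1:ℝ)/2 ≤ u k N x →
      ∃ y ∈ S N, dist x y < 1 / ((k : ℝ) + 1) := by
    intro k N x hx
    rw [huval] at hx
    have h1 : (1:ℝ)/2 ≤ max 0 (2 - (2 * ((k : ℝ) + 1)) * infDist x (S N)) :=
      le_trans hx (min_le_right _ _)
    have h2 : (1:ℝ)/2 ≤ 2 - (2 * ((k : ℝ) + 1)) * infDist x (S N) := by
      by_contra hcon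
      push_neg at hcon
      have := max_lt (show (0:ℝ) < 1/2 by norm_num) hcon
      linarith
    have hk : (0:ℝ) < (k : ℝ) + 1 := by positivity
    have hd : infDist x (S N) < 1 / ((k : ℝ) + 1) := by
      rw [lt_div_iff₀ hk]
      nlinarith
    exact (infDist_lt_iff (hSne N)).1 hd
  set L := liminf (fun n => U (f n)) atTop with hLdef
  -- main step : for every δ > 0, U (g - δ) ≤ L
  have main : ∀ δ : ℝ, 0 < δ → U (g - BoundedContinuousFunction.const Ω δ) ≤ L := by
    intro δ hδ
    set g0 : BoundedContinuousFunction Ω ℝ := g - BoundedContinuousFunction.const Ω δ with hg0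
    have hg0x : ∀ x, g0 x = g x - δ := fun x => rfl
    refine le_of_forall_sub_le ?_
    intro ε' hε'
    set B : ℝ := ‖g‖ + C₀ with hB
    have hB0 : (0:ℝ) ≤ B :=
      add_nonneg (norm_nonneg _) ((norm_nonneg (f 0)).trans (hC₀ 0))
    set M : ℝ := 2 * B + 1 with hM
    have hM0 : (0:ℝ) ≤ M := by simp only [hM]; linarith
    have step : ∀ (k : ℕ) (ψ : BoundedContinuousFunction Ω ℝ), ∃ N : ℕ,
        U ψ - ε' * (1/2)^(k+1) ≤ U (ψ - M • ((1 : BoundedContinuousFunction Ω ℝ) - u k N)) := by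
      intro k ψ
      have hmonoF : ∀ N x, (ψ - M • ((1 : BoundedContinuousFunction Ω ℝ) - u k N)) x
          ≤ (ψ - M • ((1 : BoundedContinuousFunction Ω ℝ) - u k (N+1))) x := by
        intro N x
        simp only [BoundedContinuousFunction.sub_apply, BoundedContinuousFunction.smul_apply,
          BoundedContinuousFunction.coe_one, Pi.one_apply, smul_eq_mul]
        nlinarith [humono k N x]
      have htendF : ∀ x, Tendsto
          (fun N => (ψ - M • ((1 : BoundedContinuousFunction Ω ℝ) - u k N)) x) atTop (𝓝 (ψ x)) := by
        intro x
        refine Tendsto.congr' ?_ (tendsto_const_nhds : Tendsto (fun _ : ℕ => ψ x) atTop _)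
        filter_upwards [huone k x] with N hN
        simp [BoundedContinuousFunction.sub_apply, BoundedContinuousFunction.smul_apply, hN]
      have ht := hbelow (fun N => ψ - M • ((1 : BoundedContinuousFunction Ω ℝ) - u k N)) ψ
        hmonoF htendF
      have hlt : U ψ - ε' * (1/2)^(k+1) < U ψ := by
        have : (0:ℝ) < ε' * (1/2)^(k+1) := by positivity
        linarith
      exact ((ht.eventually (eventually_gt_nhds hlt)).exists).imp fun N hN => hN.le
    choose pick hpick using step
    let ψs : ℕ → BoundedContinuousFunction Ω ℝ := fun j =>
      Nat.rec g0 (fun k p => p - M • ((1 : BoundedContinuousFunction Ω ℝ) - u k (pick k p))) j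
    have hψs : ∀ k, ψs (k+1)
        = ψs k - M • ((1 : BoundedContinuousFunction Ω ℝ) - u k (pick k (ψs k))) := fun k => rfl
    have hψ0 : ψs 0 = g0 := rfl
    set Nk : ℕ → ℕ := fun k => pick k (ψs k) with hNk
    set v : ℕ → BoundedContinuousFunction Ω ℝ := fun k => u k (Nk k) with hv
    have hψ_succ : ∀ (k : ℕ) (x : Ω), ψs (k+1) x = ψs k x - M * (1 - v k x) := by
      intro k x
      rw [hψs]
      simp [BoundedContinuousFunction.sub_apply, BoundedContinuousFunction.smul_apply]
      exact Or.inl rfl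
    have hv01 : ∀ k x, 0 ≤ v k x ∧ v k x ≤ 1 := fun k x => hu01 k (Nk k) x
    have hdec : ∀ j k, k ≤ j → ∀ x, ψs j x ≤ ψs k x := by
      intro j k hkj x
      induction hkj with
      | refl => exact le_rfl
      | @step m hm ih =>
        have h1 := hψ_succ m x
        have h2 : 0 ≤ M * (1 - v m x) := mul_nonneg hM0 (by linarith [(hv01 m x).2])
        calc ψs (m+1) x = ψs m x - M * (1 - v m x) := h1
          _ ≤ ψs m x := by linarith
          _ ≤ ψs k x := ih
    have hUψ : ∀ j, U g0 - ε' ≤ U (ψs j) := by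
      have aux : ∀ j, U g0 - ε' * (1 - (1/2)^j) ≤ U (ψs j) := by
        intro j
        induction j with
        | zero => simp [hψ0]
        | succ k ih =>
          have h1 := hpick k (ψs k)
          rw [← hψs k] at h1
          have h2 : (1/2:ℝ)^(k+1) = (1/2)^k * (1/2) := pow_succ _ _
          have e3 : ε' * (1 - (1/2:ℝ)^(k+1)) = ε' * (1 - (1/2)^k) + ε' * (1/2)^(k+1) := by
            rw [h2]; ring
          linarith
      intro j
      have h3 : (0:ℝ) ≤ (1/2:ℝ)^j := by positivity
      nlinarith [aux j, mul_nonneg hε'.le h3]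
    set K : Set Ω := ⋂ k, {x | (1:ℝ)/2 ≤ v k x} with hK
    have hKcomp : IsCompact K := by
      apply TotallyBounded.isCompact_of_isClosed
      · rw [Metric.totallyBounded_iff]
        intro δ' hδ'
        obtain ⟨k, hk⟩ := exists_nat_one_div_lt hδ'
        refine ⟨S (Nk k), hSfin (Nk k), ?_⟩
        intro x hx
        have hxk : (1:ℝ)/2 ≤ v k x := Set.mem_iInter.1 hx k
        obtain ⟨y, hy, hxy⟩ := hupos k (Nk k) x hxk
        exact Set.mem_biUnion hy (Metric.mem_ball.2 (hxy.trans hk))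
      · exact isClosed_iInter fun k => isClosed_le continuous_const (v k).continuous
    have hN := (Metric.tendstoUniformlyOn_iff.1 (hconv K hKcomp)) (δ/2) (by positivity)
    have claim : ∀ᶠ n in atTop, U g0 - ε' ≤ U (f n) := by
      filter_upwards [hN] with n hn
      have hj : ∃ j, ∀ x, ψs j x ≤ f n x := by
        by_contra hcon
        push_neg at hcon
        choose xs hxs using hcon
        have hvh : ∀ k j, k < j → (1:ℝ)/2 ≤ v k (xs j) := by
          intro k j hkj
          have h1 : ψs j (xs j) ≤ ψs (k+1) (xs j) := hdec j (k+1) hkj (xs j)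
          have h2 := hψ_succ k (xs j)
          have h3 : ψs k (xs j) ≤ g0 (xs j) := hψ0 ▸ hdec k 0 (Nat.zero_le k) (xs j)
          have h4 := hxs j
          have h5 : g0 (xs j) ≤ ‖g‖ := by
            rw [hg0x]
            have hg := (abs_le.1 (by
              have h := g.norm_coe_le_norm (xs j); rwa [Real.norm_eq_abs] at h)).2
            linarith
          have h6 : -C₀ ≤ f n (xs j) := hflb n (xs j)
          have h7 : M * (1 - v k (xs j)) ≤ B := by
            have : ψs (k+1) (xs j) = ψs k (xs j) - M * (1 - v k (xs j)) := h2
            simp only [hB]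
            linarith
          have h8 : v k (xs j) ≤ 1 := (hv01 k (xs j)).2
          simp only [hM] at h7
          nlinarith
        have htb : TotallyBounded (Set.range xs) := by
          rw [Metric.totallyBounded_iff]
          intro δ' hδ'
          obtain ⟨k, hk⟩ := exists_nat_one_div_lt hδ'
          refine ⟨S (Nk k) ∪ xs '' Set.Iic k,
            (hSfin (Nk k)).union ((Set.finite_Iic k).image xs), ?_⟩
          rintro _ ⟨j, rfl⟩
          rcases le_or_gt j k with h | h
          · exact Set.mem_biUnion (Set.mem_union_right _ ⟨j, Set.mem_Iic.2 h, rfl⟩)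
              (Metric.mem_ball_self hδ')
          · obtain ⟨y, hy, hxy⟩ := hupos k (Nk k) (xs j) (hvh k j h)
            exact Set.mem_biUnion (Set.mem_union_left _ hy) (Metric.mem_ball.2 (hxy.trans hk))
        obtain ⟨xb, -, φ, hφmono, hφtend⟩ :=
          (TotallyBounded.isCompact_of_isClosed htb.closure isClosed_closure).tendsto_subseq
            (fun j => subset_closure (Set.mem_range_self j))
        have hxbK : xb ∈ K := by
          refine Set.mem_iInter.2 fun k => ?_
          have hev : ∀ᶠ i in atTop, (1:ℝ)/2 ≤ v k (xs (φ i)) := by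
            filter_upwards [eventually_gt_atTop k] with i hi
            exact hvh k (φ i) (lt_of_lt_of_le hi hφmono.le_apply)
          exact ge_of_tendsto (((v k).continuous.tendsto xb).comp hφtend) hev
        have h1 : ∀ i, (0:ℝ) ≤ g0 (xs (φ i)) - f n (xs (φ i)) := by
          intro i
          have ha := hxs (φ i)
          have hb : ψs (φ i) (xs (φ i)) ≤ g0 (xs (φ i)) :=
            hψ0 ▸ hdec (φ i) 0 (Nat.zero_le _) (xs (φ i))
          linarith
        have h2 : Tendsto (fun i => g0 (xs (φ i)) - f n (xs (φ i))) atTop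
            (𝓝 (g0 xb - f n xb)) :=
          (((g0.continuous.tendsto xb).comp hφtend).sub
            (((f n).continuous.tendsto xb).comp hφtend))
        have h3 : 0 ≤ g0 xb - f n xb := ge_of_tendsto h2 (Eventually.of_forall h1)
        have h4 := hn xb hxbK
        rw [Real.dist_eq] at h4
        have h5 := (abs_lt.1 h4).2
        rw [hg0x] at h3
        linarith
      obtain ⟨j, hj⟩ := hj
      exact le_trans (hUψ j) (hmono _ _ hj)
    exact le_liminf_of_le cobdd claim
  -- conclude by continuity from below with g - 1/(m+1) ↑ g
  have hfinal : Tendsto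
      (fun m : ℕ => U (g - BoundedContinuousFunction.const Ω (1 / ((m:ℝ) + 1)))) atTop
      (𝓝 (U g)) := by
    apply hbelow
    · intro m x
      simp only [BoundedContinuousFunction.sub_apply, BoundedContinuousFunction.const_apply]
      have : (1:ℝ) / ((m:ℝ) + 1 + 1) ≤ 1 / ((m:ℝ) + 1) := by
        apply one_div_le_one_div_of_le (by positivity)
        linarith
      push_cast
      linarith
    · intro x
      simp only [BoundedContinuousFunction.sub_apply, BoundedContinuousFunction.const_apply]
      have h := Filter.Tendsto.const_sub (g x) tendsto_one_div_add_atTop_nhds_zero_nat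
      simpa using h
  refine le_of_tendsto hfinal (Eventually.of_forall fun m => ?_)
  exact main (1 / ((m:ℝ) + 1)) (by positivity)
end

section
/- Let Ω be a Polish space and U : C_b(Ω) → ℝ a convex monotone functional that is continuous from above (U(f_n) → U(f) whenever f_n decreases pointwise to f ∈ C_b(Ω)). Then U is also continuous from below. -/
/-! Reflecting an increasing sequence `f n ↑ g` through its limit gives `2 • g - f n`, which
decreases to `g`. Since `g` is the midpoint of `f n` and `2 • g - f n`, convexity yields
`2 * U g - U (2 • g - f n) ≤ U (f n) ≤ U g`, and continuity from above sends the lower bound to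
`U g`. -/

open Filter Topology

lemma ConvexOn.two_mul_le_add_reflection {E : Type*} [AddCommGroup E] [Module ℝ E] {U : E → ℝ}
    (hU : ConvexOn ℝ Set.univ U) (a g : E) : 2 * U g ≤ U a + U (2 • g - a) := by
  have hmid : (1 / 2 : ℝ) • a + (1 / 2 : ℝ) • (2 • g - a) = g := by module
  have := hU.2 (Set.mem_univ a) (Set.mem_univ (2 • g - a)) (by norm_num) (by norm_num)
    (by norm_num : (1 / 2 : ℝ) + 1 / 2 = 1)
  rw [hmid, smul_eq_mul, smul_eq_mul] at this
  linarith

lemma ConvexOn.tendsto_of_le_of_tendsto_reflection {E ι : Type*} [AddCommGroup E] [Module ℝ E]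
    {U : E → ℝ} (hU : ConvexOn ℝ Set.univ U) {l : Filter ι} {f : ι → E} {g : E}
    (hle : ∀ i, U (f i) ≤ U g) (hrefl : Tendsto (fun i => U (2 • g - f i)) l (𝓝 (U g))) :
    Tendsto (fun i => U (f i)) l (𝓝 (U g)) := by
  have hlower : Tendsto (fun i => 2 * U g - U (2 • g - f i)) l (𝓝 (U g)) := by
    convert tendsto_const_nhds.sub hrefl using 2
    ring
  refine tendsto_of_tendsto_of_tendsto_of_le_of_le hlower tendsto_const_nhds (fun i => ?_) hle
  linarith [hU.two_mul_le_add_reflection (f i) g]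

namespace BoundedContinuousFunction

variable {Ω : Type*} [TopologicalSpace Ω]

lemma two_nsmul_sub_apply (g a : Ω →ᵇ ℝ) (x : Ω) : (2 • g - a) x = 2 * g x - a x := by
  rw [sub_apply, two_nsmul, add_apply, two_mul]

lemma two_nsmul_sub_succ_le {f : ℕ → Ω →ᵇ ℝ} (g : Ω →ᵇ ℝ) (hf : ∀ n x, f n x ≤ f (n + 1) x) :
    ∀ n x, (2 • g - f (n + 1)) x ≤ (2 • g - f n) x := by
  intro n x
  rw [two_nsmul_sub_apply, two_nsmul_sub_apply]
  linarith [hf n x]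

lemma tendsto_two_nsmul_sub_apply {f : ℕ → Ω →ᵇ ℝ} {g : Ω →ᵇ ℝ}
    (hf : ∀ x, Tendsto (fun n => f n x) atTop (𝓝 (g x))) :
    ∀ x, Tendsto (fun n => (2 • g - f n) x) atTop (𝓝 (g x)) := by
  intro x
  simp only [two_nsmul_sub_apply]
  convert (tendsto_const_nhds (x := 2 * g x)).sub (hf x) using 2
  ring

end BoundedContinuousFunction

theorem convex_continuous_from_above_implies_below_general
    {Ω : Type*} [TopologicalSpace Ω]
    (U : BoundedContinuousFunction Ω ℝ → ℝ)
    (hconv : ConvexOn ℝ Set.univ U)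
    (hmono : ∀ f g : BoundedContinuousFunction Ω ℝ, (∀ x, f x ≤ g x) → U f ≤ U g)
    (habove : ∀ (f : ℕ → BoundedContinuousFunction Ω ℝ)
        (g : BoundedContinuousFunction Ω ℝ),
        (∀ n x, f (n + 1) x ≤ f n x) →
        (∀ x, Tendsto (fun n => f n x) atTop (𝓝 (g x))) →
        Tendsto (fun n => U (f n)) atTop (𝓝 (U g))) :
    ∀ (f : ℕ → BoundedContinuousFunction Ω ℝ) (g : BoundedContinuousFunction Ω ℝ),
      (∀ n x, f n x ≤ f (n + 1) x) →
      (∀ x, Tendsto (fun n => f n x) atTop (𝓝 (g x))) →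
      Tendsto (fun n => U (f n)) atTop (𝓝 (U g)) := by
  intro f g hincr hlim
  have hle : ∀ n, U (f n) ≤ U g := fun n => hmono _ _ fun x =>
    (monotone_nat_of_le_succ fun m => hincr m x).ge_of_tendsto (hlim x) n
  exact hconv.tendsto_of_le_of_tendsto_reflection hle <| habove _ g
    (BoundedContinuousFunction.two_nsmul_sub_succ_le g hincr)
    (BoundedContinuousFunction.tendsto_two_nsmul_sub_apply hlim)

theorem convex_continuous_from_above_implies_below
    {Ω : Type*} [TopologicalSpace Ω] [PolishSpace Ω]
    (U : BoundedContinuousFunction Ω ℝ → ℝ)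
    (hconv : ConvexOn ℝ Set.univ U)
    (hmono : ∀ f g : BoundedContinuousFunction Ω ℝ, (∀ x, f x ≤ g x) → U f ≤ U g)
    (habove : ∀ (f : ℕ → BoundedContinuousFunction Ω ℝ)
        (g : BoundedContinuousFunction Ω ℝ),
        (∀ n x, f (n + 1) x ≤ f n x) →
        (∀ x, Tendsto (fun n => f n x) atTop (𝓝 (g x))) →
        Tendsto (fun n => U (f n)) atTop (𝓝 (U g))) :
    ∀ (f : ℕ → BoundedContinuousFunction Ω ℝ) (g : BoundedContinuousFunction Ω ℝ),
      (∀ n x, f n x ≤ f (n + 1) x) →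
      (∀ x, Tendsto (fun n => f n x) atTop (𝓝 (g x))) →
      Tendsto (fun n => U (f n)) atTop (𝓝 (U g)) :=
  convex_continuous_from_above_implies_below_general U hconv hmono habove
end

section
/- Let Ω be a Polish space and λ : C_b(Ω) → ℝ a positive linear functional (λ(f) ≥ 0 whenever f ≥ 0) that is continuous from below: λ(f_n) → λ(f) whenever (f_n) ⊆ C_b(Ω) increases pointwise to f ∈ C_b(Ω). Then there exists a finite countably additive Borel measure μ on Ω such that λ(f) = ∫ f dμ for all f ∈ C_b(Ω). -/
open Filter Topology MeasureTheory

namespace DaniellAux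

open Metric Set BoundedContinuousFunction ENNReal NNReal

variable {Ω : Type*} [MetricSpace Ω]

/-- Build a bounded continuous function from a continuous function with values in `[0,1]`. -/
noncomputable def mkB (f : Ω → ℝ) (hc : Continuous f) (h0 : ∀ x, 0 ≤ f x) (h1 : ∀ x, f x ≤ 1) :
    BoundedContinuousFunction Ω ℝ :=
  ⟨⟨f, hc⟩, 1, fun x y => by
    simp only [ContinuousMap.coe_mk, Real.dist_eq]
    have := h0 x; have := h1 x; have := h0 y; have := h1 y
    rw [abs_le]; constructor <;> linarith⟩

@[simp] lemma mkB_apply (f : Ω → ℝ) (hc h0 h1) (x : Ω) : mkB f hc h0 h1 x = f x := rfl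

/-- The predicate "0 ≤ f ≤ 1 and f vanishes outside s". -/
def Sub01 (s : Set Ω) (f : BoundedContinuousFunction Ω ℝ) : Prop :=
  (∀ x, 0 ≤ f x) ∧ (∀ x, f x ≤ 1) ∧ ∀ x ∉ s, f x = 0

lemma sub01_zero (s : Set Ω) : Sub01 s (0 : BoundedContinuousFunction Ω ℝ) := by
  refine ⟨fun x => ?_, fun x => ?_, fun x _ => ?_⟩ <;> simp

lemma Sub01.mono {s t : Set Ω} {f : BoundedContinuousFunction Ω ℝ} (h : Sub01 s f) (hst : s ⊆ t) :
    Sub01 t f :=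
  ⟨h.1, h.2.1, fun x hx => h.2.2 x fun hxs => hx (hst hxs)⟩

variable (lam : BoundedContinuousFunction Ω ℝ →ₗ[ℝ] ℝ)

lemma lam_mono (hpos : ∀ f : BoundedContinuousFunction Ω ℝ, (∀ x, 0 ≤ f x) → 0 ≤ lam f)
    {f g : BoundedContinuousFunction Ω ℝ} (h : ∀ x, f x ≤ g x) : lam f ≤ lam g := by
  have := hpos (g - f) (fun x => by simpa using sub_nonneg.2 (h x))
  rw [map_sub] at this; linarith

noncomputable def nu (s : Set Ω) : ℝ≥0∞ :=
  ⨆ f : {f : BoundedContinuousFunction Ω ℝ // Sub01 s f}, ENNReal.ofReal (lam f.1)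

lemma le_nu {s : Set Ω} {f : BoundedContinuousFunction Ω ℝ} (hf : Sub01 s f) :
    ENNReal.ofReal (lam f) ≤ nu lam s :=
  le_iSup (fun g : {f // Sub01 s f} => ENNReal.ofReal (lam g.1)) ⟨f, hf⟩

lemma nu_le {s : Set Ω} {a : ℝ≥0∞}
    (h : ∀ f : BoundedContinuousFunction Ω ℝ, Sub01 s f → ENNReal.ofReal (lam f) ≤ a) :
    nu lam s ≤ a :=
  iSup_le fun f => h f.1 f.2

lemma nu_mono {s t : Set Ω} (hst : s ⊆ t) : nu lam s ≤ nu lam t :=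
  nu_le lam fun f hf => le_nu lam (hf.mono hst)

lemma nu_empty : nu lam (∅ : Set Ω) = 0 := by
  refine le_antisymm (nu_le lam fun f hf => ?_) zero_le
  have : f = 0 := by ext x; simpa using hf.2.2 x (notMem_empty x)
  simp [this]

lemma nu_univ (hpos : ∀ f : BoundedContinuousFunction Ω ℝ, (∀ x, 0 ≤ f x) → 0 ≤ lam f) :
    nu lam (univ : Set Ω) = ENNReal.ofReal (lam 1) := by
  refine le_antisymm (nu_le lam fun f hf => ?_) (le_nu lam ?_)
  · exact ENNReal.ofReal_le_ofReal (lam_mono lam hpos fun x => by simpa using hf.2.1 x)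
  · exact ⟨fun x => by simp, fun x => by simp, fun x hx => absurd (mem_univ x) hx⟩

lemma nu_superadd (hpos : ∀ f : BoundedContinuousFunction Ω ℝ, (∀ x, 0 ≤ f x) → 0 ≤ lam f)
    {A B V : Set Ω} (hdisj : Disjoint A B) (hA : A ⊆ V) (hB : B ⊆ V) :
    nu lam A + nu lam B ≤ nu lam V := by
  have hne : ∀ s : Set Ω, Nonempty {f : BoundedContinuousFunction Ω ℝ // Sub01 s f} := by
    intro s
    exact ⟨0, fun x => by simp, fun x => by simp, fun x _ => by simp⟩
  rw [nu, nu, ENNReal.iSup_add]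
  refine iSup_le fun f => ?_
  rw [ENNReal.add_iSup]
  refine iSup_le fun g => ?_
  have hsum : Sub01 V (f.1 + g.1) := by
    refine ⟨fun x => by simpa using add_nonneg (f.2.1 x) (g.2.1 x), fun x => ?_, fun x hx => ?_⟩
    · by_cases hxA : x ∈ A
      · have : g.1 x = 0 := g.2.2.2 x (disjoint_left.1 hdisj hxA)
        simpa [this] using f.2.2.1 x
      · have : f.1 x = 0 := f.2.2.2 x hxA
        simpa [this] using g.2.2.1 x
    · have h1 : f.1 x = 0 := f.2.2.2 x fun h => hx (hA h)
      have h2 : g.1 x = 0 := g.2.2.2 x fun h => hx (hB h)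
      simp [h1, h2]
  calc ENNReal.ofReal (lam f.1) + ENNReal.ofReal (lam g.1)
      = ENNReal.ofReal (lam (f.1 + g.1)) := by
        rw [map_add, ENNReal.ofReal_add (hpos _ f.2.1) (hpos _ g.2.1)]
    _ ≤ nu lam V := le_nu lam hsum

/-- The key countable subadditivity lemma, using continuity from below. -/
lemma nu_iUnion (hpos : ∀ f : BoundedContinuousFunction Ω ℝ, (∀ x, 0 ≤ f x) → 0 ≤ lam f)
    (hbelow : ∀ (f : ℕ → BoundedContinuousFunction Ω ℝ)
        (g : BoundedContinuousFunction Ω ℝ),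
        (∀ n x, f n x ≤ f (n + 1) x) →
        (∀ x, Tendsto (fun n => f n x) atTop (𝓝 (g x))) →
        Tendsto (fun n => lam (f n)) atTop (𝓝 (lam g)))
    (U : ℕ → Set Ω) (hU : ∀ n, IsOpen (U n)) {f : BoundedContinuousFunction Ω ℝ}
    (hf : Sub01 (⋃ n, U n) f) :
    ENNReal.ofReal (lam f) ≤ ∑' n, nu lam (U n) := by
  by_cases hcase : ∃ k, U k = univ
  · obtain ⟨k, hk⟩ := hcase
    have h1 : Sub01 (U k) f := by
      rw [hk]; exact ⟨hf.1, hf.2.1, fun x hx => absurd (mem_univ x) hx⟩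
    exact le_trans (le_nu lam h1) (ENNReal.le_tsum k)
  push_neg at hcase
  have hne : ∀ k, ((U k)ᶜ : Set Ω).Nonempty := fun k => nonempty_compl.2 (hcase k)
  -- the cutoff functions
  set d : ℕ → BoundedContinuousFunction Ω ℝ := fun k =>
    mkB (fun x => min 1 (infDist x (U k)ᶜ)) (continuous_const.min (continuous_infDist_pt _))
      (fun x => le_min zero_le_one infDist_nonneg) (fun x => min_le_left _ _) with hd
  have hd0 : ∀ k x, 0 ≤ d k x := fun k x => le_min zero_le_one infDist_nonneg
  have hdvan : ∀ k x, x ∉ U k → d k x = 0 := by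
    intro k x hx
    have : infDist x (U k)ᶜ = 0 := infDist_zero_of_mem (by simpa using hx)
    simp [hd, this]
  have hdpos : ∀ k x, x ∈ U k → 0 < d k x := by
    intro k x hx
    have h1 : (0 : ℝ) < infDist x (U k)ᶜ :=
      (((hU k).isClosed_compl).notMem_iff_infDist_pos (hne k)).1 (by simpa using hx)
    exact lt_min one_pos h1
  set S : ℕ → Ω → ℝ := fun n x => ∑ k ∈ Finset.range n, d k x with hS
  have hS0 : ∀ n x, 0 ≤ S n x := fun n x => Finset.sum_nonneg fun k _ => hd0 k x
  have hScont : ∀ n, Continuous (S n) := fun n =>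
    continuous_finset_sum _ fun k _ => (d k).continuous
  have hSmono : ∀ n x, S n x ≤ S (n + 1) x := by
    intro n x
    rw [hS]; simp only [Finset.sum_range_succ]
    exact le_add_of_nonneg_right (hd0 n x)
  set t : ℕ → ℕ → BoundedContinuousFunction Ω ℝ := fun n k =>
    mkB (fun x => min 1 (n * S k x)) (continuous_const.min (continuous_const.mul (hScont k)))
      (fun x => le_min zero_le_one (mul_nonneg (Nat.cast_nonneg n) (hS0 k x)))
      (fun x => min_le_left _ _) with ht
  have ht01 : ∀ n k x, 0 ≤ t n k x ∧ t n k x ≤ 1 := fun n k x =>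
    ⟨le_min zero_le_one (mul_nonneg (Nat.cast_nonneg n) (hS0 k x)), min_le_left _ _⟩
  have htmono : ∀ n k x, t n k x ≤ t n (k + 1) x := by
    intro n k x
    exact min_le_min le_rfl (mul_le_mul_of_nonneg_left (hSmono k x) (Nat.cast_nonneg n))
  -- step: fixed n bound
  have hstep : ∀ n : ℕ, ENNReal.ofReal (lam (f * t n n)) ≤ ∑' k, nu lam (U k) := by
    intro n
    have htele : f * t n n = ∑ k ∈ Finset.range n, (f * t n (k + 1) - f * t n k) := by
      rw [Finset.sum_range_sub (fun k => f * t n k)]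
      have : f * t n 0 = 0 := by
        ext x
        simp [ht, hS]
      rw [this, sub_zero]
    have hsub : ∀ k, Sub01 (U k) (f * t n (k + 1) - f * t n k) := by
      intro k
      refine ⟨fun x => ?_, fun x => ?_, fun x hx => ?_⟩
      · simp only [BoundedContinuousFunction.coe_sub, BoundedContinuousFunction.coe_mul,
          Pi.sub_apply, Pi.mul_apply]
        have := htmono n k x
        nlinarith [hf.1 x]
      · simp only [BoundedContinuousFunction.coe_sub, BoundedContinuousFunction.coe_mul,
          Pi.sub_apply, Pi.mul_apply]
        have h1 := (ht01 n (k + 1) x).2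
        have h2 := (ht01 n k x).1
        have h3 := hf.1 x
        have h4 := hf.2.1 x
        nlinarith [htmono n k x]
      · have hdx : d k x = 0 := hdvan k x hx
        have hSS : S (k + 1) x = S k x := by
          rw [hS]; simp [Finset.sum_range_succ, hdx]
        simp only [BoundedContinuousFunction.coe_sub, BoundedContinuousFunction.coe_mul,
          Pi.sub_apply, Pi.mul_apply]
        simp [ht, hSS]
    calc ENNReal.ofReal (lam (f * t n n))
        = ENNReal.ofReal (∑ k ∈ Finset.range n, lam (f * t n (k + 1) - f * t n k)) := by
          rw [htele, map_sum]
      _ = ∑ k ∈ Finset.range n, ENNReal.ofReal (lam (f * t n (k + 1) - f * t n k)) :=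
          ENNReal.ofReal_sum_of_nonneg fun k _ => hpos _ (hsub k).1
      _ ≤ ∑ k ∈ Finset.range n, nu lam (U k) :=
          Finset.sum_le_sum fun k _ => le_nu lam (hsub k)
      _ ≤ ∑' k, nu lam (U k) := ENNReal.sum_le_tsum _
  -- monotone convergence of f * t n n to f
  have hmono : ∀ n x, (f * t n n) x ≤ (f * t (n + 1) (n + 1)) x := by
    intro n x
    simp only [BoundedContinuousFunction.coe_mul, Pi.mul_apply]
    refine mul_le_mul_of_nonneg_left ?_ (hf.1 x)
    refine min_le_min le_rfl ?_
    exact mul_le_mul (by exact_mod_cast Nat.le_succ n) (hSmono n x) (hS0 n x)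
      (Nat.cast_nonneg _)
  have hlim : ∀ x, Tendsto (fun n => (f * t n n) x) atTop (𝓝 (f x)) := by
    intro x
    by_cases hfx : f x = 0
    · simp only [BoundedContinuousFunction.coe_mul, Pi.mul_apply, hfx, zero_mul]
      exact tendsto_const_nhds
    · have hxU : x ∈ ⋃ n, U n := by
        by_contra hxn
        exact hfx (hf.2.2 x hxn)
      obtain ⟨k, hk⟩ := mem_iUnion.1 hxU
      have hc : 0 < d k x := hdpos k x hk
      obtain ⟨N, hN⟩ := exists_nat_ge (1 / d k x)
      refine tendsto_atTop_of_eventually_const (i₀ := max N (k + 1)) fun n hn => ?_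
      have hkn : k < n := lt_of_lt_of_le (Nat.lt_succ_self k) (le_trans (le_max_right _ _) hn)
      have hSn : d k x ≤ S n x := by
        rw [hS]
        exact Finset.single_le_sum (fun i _ => hd0 i x) (Finset.mem_range.2 hkn)
      have h1n : (1 : ℝ) ≤ n * S n x := by
        have hNn : (N : ℝ) ≤ n := Nat.cast_le.2 (le_trans (le_max_left _ _) hn)
        have : (1 : ℝ) ≤ N * d k x := by
          rw [div_le_iff₀ hc] at hN
          linarith
        calc (1 : ℝ) ≤ N * d k x := this
          _ ≤ n * S n x := mul_le_mul hNn hSn hc.le (Nat.cast_nonneg _)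
      have heq : (t n n) x = 1 := min_eq_left h1n
      simp only [BoundedContinuousFunction.coe_mul, Pi.mul_apply, heq, mul_one]
  have htend : Tendsto (fun n => lam (f * t n n)) atTop (𝓝 (lam f)) :=
    hbelow (fun n => f * t n n) f hmono hlim
  exact le_of_tendsto (ENNReal.tendsto_ofReal htend) (Eventually.of_forall hstep)


noncomputable def nu' (A : Set Ω) : ℝ≥0∞ :=
  ⨅ (U : Set Ω) (_ : IsOpen U) (_ : A ⊆ U), nu lam U

lemma nu'_le {A U : Set Ω} (hU : IsOpen U) (hAU : A ⊆ U) : nu' lam A ≤ nu lam U :=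
  iInf_le_of_le U (iInf_le_of_le hU (iInf_le _ hAU))

lemma nu'_empty : nu' lam (∅ : Set Ω) = 0 :=
  le_antisymm ((nu'_le lam isOpen_empty Subset.rfl).trans (nu_empty lam).le) zero_le

lemma nu'_open {U : Set Ω} (hU : IsOpen U) : nu' lam U = nu lam U :=
  le_antisymm (nu'_le lam hU Subset.rfl)
    (le_iInf fun V => le_iInf fun _ => le_iInf fun hUV => nu_mono lam hUV)

noncomputable def mOut : OuterMeasure Ω :=
  OuterMeasure.ofFunction (nu' lam) (nu'_empty lam)

lemma exists_open_nu_lt {A : Set Ω} {c : ℝ≥0∞} (h : nu' lam A < c) :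
    ∃ U, IsOpen U ∧ A ⊆ U ∧ nu lam U < c := by
  rw [nu'] at h
  simp only [iInf_lt_iff] at h
  obtain ⟨U, hU, hAU, hlt⟩ := h
  exact ⟨U, hU, hAU, hlt⟩

lemma mOut_le_tsum_of_cover {s : Set Ω} {C : ℕ → Set Ω} (h : s ⊆ ⋃ n, C n) :
    mOut lam s ≤ ∑' n, nu' lam (C n) := by
  rw [mOut, OuterMeasure.ofFunction_apply]
  exact iInf₂_le C h

lemma nu_le_mOut (hpos : ∀ f : BoundedContinuousFunction Ω ℝ, (∀ x, 0 ≤ f x) → 0 ≤ lam f)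
    (hbelow : ∀ (f : ℕ → BoundedContinuousFunction Ω ℝ)
        (g : BoundedContinuousFunction Ω ℝ),
        (∀ n x, f n x ≤ f (n + 1) x) →
        (∀ x, Tendsto (fun n => f n x) atTop (𝓝 (g x))) →
        Tendsto (fun n => lam (f n)) atTop (𝓝 (lam g)))
    {V : Set Ω} (hV : IsOpen V) : nu lam V ≤ mOut lam V := by
  rw [mOut, OuterMeasure.ofFunction_apply]
  refine le_iInf fun C => le_iInf fun hC => ?_
  refine ENNReal.le_of_forall_pos_le_add fun ε hε h' => ?_
  obtain ⟨δ, δpos, hδsum⟩ :=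
    ENNReal.exists_pos_sum_of_countable' (ε := (ε : ℝ≥0∞)) (by exact_mod_cast hε.ne') ℕ
  have hne : ∀ n, nu' lam (C n) ≠ ⊤ := fun n => (lt_of_le_of_lt (ENNReal.le_tsum n) h').ne
  have hVn : ∀ n, ∃ U, IsOpen U ∧ C n ⊆ U ∧ nu lam U < nu' lam (C n) + δ n := fun n =>
    exists_open_nu_lt lam (ENNReal.lt_add_right (hne n) (δpos n).ne')
  choose W hWopen hCW hWlt using hVn
  have hcov : V ⊆ ⋃ n, W n := hC.trans (iUnion_mono hCW)
  have h1 : nu lam V ≤ ∑' n, nu lam (W n) := by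
    refine nu_le lam fun f hf => ?_
    exact nu_iUnion lam hpos hbelow W hWopen (hf.mono hcov)
  calc nu lam V ≤ ∑' n, nu lam (W n) := h1
    _ ≤ ∑' n, (nu' lam (C n) + δ n) := ENNReal.tsum_le_tsum fun n => (hWlt n).le
    _ = (∑' n, nu' lam (C n)) + ∑' n, δ n := ENNReal.tsum_add
    _ ≤ (∑' n, nu' lam (C n)) + ε := add_le_add le_rfl hδsum.le

lemma mOut_open (hpos : ∀ f : BoundedContinuousFunction Ω ℝ, (∀ x, 0 ≤ f x) → 0 ≤ lam f)
    (hbelow : ∀ (f : ℕ → BoundedContinuousFunction Ω ℝ)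
        (g : BoundedContinuousFunction Ω ℝ),
        (∀ n x, f n x ≤ f (n + 1) x) →
        (∀ x, Tendsto (fun n => f n x) atTop (𝓝 (g x))) →
        Tendsto (fun n => lam (f n)) atTop (𝓝 (lam g)))
    {V : Set Ω} (hV : IsOpen V) : mOut lam V = nu lam V :=
  le_antisymm ((OuterMeasure.ofFunction_le _).trans (nu'_open lam hV).le)
    (nu_le_mOut lam hpos hbelow hV)

lemma nu'_inter_add (hpos : ∀ f : BoundedContinuousFunction Ω ℝ, (∀ x, 0 ≤ f x) → 0 ≤ lam f)
    {A' B' : Set Ω} (hA' : IsOpen A') (hB' : IsOpen B') (hd : Disjoint A' B') (C : Set Ω) :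
    nu' lam (C ∩ A') + nu' lam (C ∩ B') ≤ nu' lam C := by
  refine le_iInf fun U => le_iInf fun hU => le_iInf fun hCU => ?_
  calc nu' lam (C ∩ A') + nu' lam (C ∩ B')
      ≤ nu lam (U ∩ A') + nu lam (U ∩ B') :=
        add_le_add (nu'_le lam (hU.inter hA') (inter_subset_inter hCU Subset.rfl))
          (nu'_le lam (hU.inter hB') (inter_subset_inter hCU Subset.rfl))
    _ ≤ nu lam U := nu_superadd lam hpos
        (hd.mono inter_subset_right inter_subset_right) inter_subset_left inter_subset_left

lemma mOut_isMetric (hpos : ∀ f : BoundedContinuousFunction Ω ℝ, (∀ x, 0 ≤ f x) → 0 ≤ lam f) :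
    (mOut lam).IsMetric := by
  intro s t hsep
  refine le_antisymm (measure_union_le s t) ?_
  obtain ⟨r, hr0, hr⟩ := hsep
  set A' : Set Ω := {x | EMetric.infEdist x s < r / 2} with hA'
  set B' : Set Ω := {x | EMetric.infEdist x t < r / 2} with hB'
  have hA'open : IsOpen A' := isOpen_lt EMetric.continuous_infEdist continuous_const
  have hB'open : IsOpen B' := isOpen_lt EMetric.continuous_infEdist continuous_const
  have hsA' : s ⊆ A' := fun x hx => by
    simp only [hA', mem_setOf_eq, EMetric.infEdist_zero_of_mem hx]
    exact lt_of_eq_of_lt (EMetric.infEdist_zero_of_mem hx) (ENNReal.half_pos hr0)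
  have htB' : t ⊆ B' := fun x hx => by
    simp only [hB', mem_setOf_eq, EMetric.infEdist_zero_of_mem hx]
    exact lt_of_eq_of_lt (EMetric.infEdist_zero_of_mem hx) (ENNReal.half_pos hr0)
  have hdisj : Disjoint A' B' := by
    rw [disjoint_left]
    intro x hxA hxB
    obtain ⟨y, hy, hxy⟩ := EMetric.infEdist_lt_iff.1 hxA
    obtain ⟨z, hz, hxz⟩ := EMetric.infEdist_lt_iff.1 hxB
    have h1 : r ≤ edist y z := hr y hy z hz
    have h2 : edist y z < r := by
      calc edist y z ≤ edist y x + edist x z := edist_triangle _ _ _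
        _ < r / 2 + r / 2 := ENNReal.add_lt_add (by rwa [edist_comm]) hxz
        _ = r := ENNReal.add_halves r
    exact absurd h1 h2.not_ge
  rw [mOut, OuterMeasure.ofFunction_apply]
  refine le_iInf fun C => le_iInf fun hC => ?_
  have hs : mOut lam s ≤ ∑' n, nu' lam (C n ∩ A') := by
    refine mOut_le_tsum_of_cover lam fun x hx => mem_iUnion.2 ?_
    obtain ⟨n, hn⟩ := mem_iUnion.1 (hC (Or.inl hx : x ∈ s ∪ t))
    exact ⟨n, hn, hsA' hx⟩
  have ht : mOut lam t ≤ ∑' n, nu' lam (C n ∩ B') := by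
    refine mOut_le_tsum_of_cover lam fun x hx => mem_iUnion.2 ?_
    obtain ⟨n, hn⟩ := mem_iUnion.1 (hC (Or.inr hx : x ∈ s ∪ t))
    exact ⟨n, hn, htB' hx⟩
  calc mOut lam s + mOut lam t
      ≤ (∑' n, nu' lam (C n ∩ A')) + ∑' n, nu' lam (C n ∩ B') := add_le_add hs ht
    _ = ∑' n, (nu' lam (C n ∩ A') + nu' lam (C n ∩ B')) := ENNReal.tsum_add.symm
    _ ≤ ∑' n, nu' lam (C n) :=
        ENNReal.tsum_le_tsum fun n => nu'_inter_add lam hpos hA'open hB'open hdisj (C n)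

theorem main {Ω : Type*} [MetricSpace Ω] [MeasurableSpace Ω] [BorelSpace Ω]
    (lam : BoundedContinuousFunction Ω ℝ →ₗ[ℝ] ℝ)
    (hpos : ∀ f : BoundedContinuousFunction Ω ℝ, (∀ x, 0 ≤ f x) → 0 ≤ lam f)
    (hbelow : ∀ (f : ℕ → BoundedContinuousFunction Ω ℝ)
        (g : BoundedContinuousFunction Ω ℝ),
        (∀ n x, f n x ≤ f (n + 1) x) →
        (∀ x, Tendsto (fun n => f n x) atTop (𝓝 (g x))) →
        Tendsto (fun n => lam (f n)) atTop (𝓝 (lam g))) :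
    ∃ μ : Measure Ω, IsFiniteMeasure μ ∧
      ∀ f : BoundedContinuousFunction Ω ℝ, lam f = ∫ x, f x ∂μ := by
  set μ : Measure Ω := (mOut lam).toMeasure ((mOut_isMetric lam hpos).le_caratheodory) with hμ
  have hopen : ∀ {V : Set Ω}, IsOpen V → μ V = nu lam V := by
    intro V hV
    rw [hμ, MeasureTheory.toMeasure_apply _ _ hV.measurableSet]
    exact mOut_open lam hpos hbelow hV
  have hfin : IsFiniteMeasure μ := by
    constructor
    rw [hopen isOpen_univ, nu_univ lam hpos]
    exact ENNReal.ofReal_lt_top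
  haveI := hfin
  refine ⟨μ, hfin, ?_⟩
  -- Step 1 : the representation for functions with values in [0,1]
  have key : ∀ f : BoundedContinuousFunction Ω ℝ, (∀ x, 0 ≤ f x) → (∀ x, f x ≤ 1) →
      lam f = ∫ x, f x ∂μ := by
    intro f h0 h1
    have hdiff : ∀ N : ℕ, 0 < N → |lam f - ∫ x, f x ∂μ| ≤ (μ univ).toReal / N := by
      intro N hN
      have hNR : (0 : ℝ) < N := Nat.cast_pos.2 hN
      set q : ℕ → BoundedContinuousFunction Ω ℝ := fun k =>
        mkB (fun x => min (f x) (k / N)) (f.continuous.min continuous_const)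
          (fun x => le_min (h0 x) (by positivity))
          (fun x => (min_le_left _ _).trans (h1 x)) with hq
      set g : ℕ → BoundedContinuousFunction Ω ℝ := fun k => q (k + 1) - q k with hgdef
      set Uk : ℕ → Set Ω := fun k => f ⁻¹' Ioi ((k : ℝ) / N) with hUkdef
      have hUopen : ∀ k, IsOpen (Uk k) := fun k => isOpen_Ioi.preimage f.continuous
      set rk : ℕ → ℝ := fun k => (μ (Uk k)).toReal with hrk
      have hdiv : ∀ k : ℕ, ((k + 1 : ℕ) : ℝ) / N = (k : ℝ) / N + 1 / N := by
        intro k; push_cast; ring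
      have hgx : ∀ k x, g k x = min (f x) (((k + 1 : ℕ) : ℝ) / N) - min (f x) ((k : ℝ) / N) := by
        intro k x; simp [hgdef, hq]
      have hg0 : ∀ k x, 0 ≤ g k x := by
        intro k x
        rw [hgx]
        refine sub_nonneg.2 (min_le_min le_rfl ?_)
        rw [hdiv]
        have : (0 : ℝ) ≤ 1 / N := by positivity
        linarith
      have hgle : ∀ k x, g k x ≤ 1 / N := by
        intro k x
        rw [hgx, hdiv]
        have h1N : (0 : ℝ) ≤ 1 / N := by positivity
        rcases le_total (f x) ((k : ℝ) / N) with h | h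
        · rw [min_eq_left h, min_eq_left (by linarith)]
          linarith
        · rw [min_eq_right h]
          have := min_le_right (f x) ((k : ℝ) / N + 1 / N)
          linarith
      have hgvan : ∀ k x, x ∉ Uk k → g k x = 0 := by
        intro k x hx
        have hfk : f x ≤ (k : ℝ) / N := by
          simpa [hUkdef, not_lt] using hx
        have hfk2 : f x ≤ ((k + 1 : ℕ) : ℝ) / N := by
          rw [hdiv]
          have : (0 : ℝ) ≤ 1 / N := by positivity
          linarith
        rw [hgx, min_eq_left hfk, min_eq_left hfk2]
        ring
      have hgfull : ∀ k x, x ∈ Uk (k + 1) → g k x = 1 / N := by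
        intro k x hx
        have hfk : ((k + 1 : ℕ) : ℝ) / N ≤ f x := le_of_lt (by simpa [hUkdef] using hx)
        have hfk2 : (k : ℝ) / N ≤ f x := by
          rw [hdiv] at hfk
          have : (0 : ℝ) ≤ 1 / N := by positivity
          linarith
        rw [hgx, min_eq_right hfk, min_eq_right hfk2, hdiv]
        ring
      have hsum : ∀ x, f x = ∑ k ∈ Finset.range N, g k x := by
        intro x
        have htel := Finset.sum_range_sub (fun k => q k x) N
        have hgq : ∀ k, g k x = q (k + 1) x - q k x := by
          intro k; simp [hgdef]
        have hqN : q N x = f x := by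
          simp only [hq, mkB_apply]
          rw [div_self hNR.ne', min_eq_left (h1 x)]
        have hq0 : q 0 x = 0 := by
          simp only [hq, mkB_apply]
          rw [Nat.cast_zero, zero_div, min_eq_right (h0 x)]
        calc f x = q N x - q 0 x := by rw [hqN, hq0, sub_zero]
          _ = ∑ k ∈ Finset.range N, (q (k + 1) x - q k x) := htel.symm
          _ = ∑ k ∈ Finset.range N, g k x := by
              exact (Finset.sum_congr rfl fun k _ => (hgq k).symm)
      have hsub : ∀ k, Sub01 (Uk k) ((N : ℝ) • g k) := by
        intro k
        refine ⟨fun x => ?_, fun x => ?_, fun x hx => ?_⟩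
        · simp only [BoundedContinuousFunction.coe_smul, Pi.smul_apply, smul_eq_mul]
          exact mul_nonneg hNR.le (hg0 k x)
        · simp only [BoundedContinuousFunction.coe_smul, Pi.smul_apply, smul_eq_mul]
          calc (N : ℝ) * g k x ≤ N * (1 / N) := mul_le_mul_of_nonneg_left (hgle k x) hNR.le
            _ = 1 := by field_simp
        · simp only [BoundedContinuousFunction.coe_smul, Pi.smul_apply, smul_eq_mul]
          rw [hgvan k x hx, mul_zero]
      have hlam_le : ∀ k, lam (g k) ≤ rk k / N := by
        intro k
        have h1' : ENNReal.ofReal (lam ((N : ℝ) • g k)) ≤ μ (Uk k) := by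
          rw [hopen (hUopen k)]
          exact le_nu lam (hsub k)
        rw [_root_.map_smul, smul_eq_mul] at h1'
        have h2 : (N : ℝ) * lam (g k) ≤ rk k :=
          (ENNReal.ofReal_le_iff_le_toReal (measure_ne_top μ _)).1 h1'
        rw [le_div_iff₀ hNR]
        linarith
      have hlam_ge : ∀ k, rk (k + 1) / N ≤ lam (g k) := by
        intro k
        have h1' : nu lam (Uk (k + 1)) ≤ ENNReal.ofReal (lam ((N : ℝ) • g k)) := by
          refine nu_le lam fun h hh => ENNReal.ofReal_le_ofReal ?_
          refine lam_mono lam hpos fun x => ?_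
          by_cases hx : x ∈ Uk (k + 1)
          · have hval : ((N : ℝ) • g k) x = 1 := by
              simp only [BoundedContinuousFunction.coe_smul, Pi.smul_apply, smul_eq_mul]
              rw [hgfull k x hx]
              field_simp
            rw [hval]
            exact hh.2.1 x
          · rw [hh.2.2 x hx]
            simp only [BoundedContinuousFunction.coe_smul, Pi.smul_apply, smul_eq_mul]
            exact mul_nonneg hNR.le (hg0 k x)
        have h2 : μ (Uk (k + 1)) ≤ ENNReal.ofReal ((N : ℝ) * lam (g k)) := by
          rw [hopen (hUopen (k + 1))]
          rwa [_root_.map_smul, smul_eq_mul] at h1'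
        have h3 : rk (k + 1) ≤ N * lam (g k) :=
          ENNReal.toReal_le_of_le_ofReal (mul_nonneg hNR.le (hpos _ (hg0 k))) h2
        rw [div_le_iff₀ hNR]
        linarith
      have hint : ∀ k, Integrable (g k) μ := fun k => (g k).integrable μ
      have hint_le : ∀ k, ∫ x, g k x ∂μ ≤ rk k / N := by
        intro k
        have hpt : ∀ x, g k x ≤ (Uk k).indicator (fun _ => (1 : ℝ) / N) x := by
          intro x
          by_cases hx : x ∈ Uk k
          · rw [indicator_of_mem hx]; exact hgle k x
          · rw [indicator_of_notMem hx, hgvan k x hx]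
        calc ∫ x, g k x ∂μ ≤ ∫ x, (Uk k).indicator (fun _ => (1 : ℝ) / N) x ∂μ :=
            integral_mono (hint k)
              ((integrable_const _).indicator (hUopen k).measurableSet) hpt
          _ = (μ (Uk k)).toReal • ((1 : ℝ) / N) :=
              integral_indicator_const _ (hUopen k).measurableSet
          _ = rk k / N := by rw [smul_eq_mul, hrk]; ring
      have hint_ge : ∀ k, rk (k + 1) / N ≤ ∫ x, g k x ∂μ := by
        intro k
        have hpt : ∀ x, (Uk (k + 1)).indicator (fun _ => (1 : ℝ) / N) x ≤ g k x := by
          intro x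
          by_cases hx : x ∈ Uk (k + 1)
          · rw [indicator_of_mem hx, hgfull k x hx]
          · rw [indicator_of_notMem hx]; exact hg0 k x
        calc rk (k + 1) / N = (μ (Uk (k + 1))).toReal • ((1 : ℝ) / N) := by
              rw [smul_eq_mul, hrk]; ring
          _ = ∫ x, (Uk (k + 1)).indicator (fun _ => (1 : ℝ) / N) x ∂μ :=
              (integral_indicator_const _ (hUopen (k + 1)).measurableSet).symm
          _ ≤ ∫ x, g k x ∂μ :=
              integral_mono ((integrable_const _).indicator (hUopen (k + 1)).measurableSet)
                (hint k) hpt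
      have hlamf : lam f = ∑ k ∈ Finset.range N, lam (g k) := by
        have hfs : f = ∑ k ∈ Finset.range N, g k := by
          ext x
          simp only [BoundedContinuousFunction.coe_sum, Finset.sum_apply]
          exact hsum x
        rw [hfs, map_sum]
      have hintf : ∫ x, f x ∂μ = ∑ k ∈ Finset.range N, ∫ x, g k x ∂μ := by
        rw [← integral_finset_sum _ (fun k _ => hint k)]
        exact integral_congr_ae (ae_of_all _ fun x => hsum x)
      have hLlam : ∑ k ∈ Finset.range N, rk (k + 1) / N ≤ lam f := by
        rw [hlamf]; exact Finset.sum_le_sum fun k _ => hlam_ge k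
      have hRlam : lam f ≤ ∑ k ∈ Finset.range N, rk k / N := by
        rw [hlamf]; exact Finset.sum_le_sum fun k _ => hlam_le k
      have hLint : ∑ k ∈ Finset.range N, rk (k + 1) / N ≤ ∫ x, f x ∂μ := by
        rw [hintf]; exact Finset.sum_le_sum fun k _ => hint_ge k
      have hRint : ∫ x, f x ∂μ ≤ ∑ k ∈ Finset.range N, rk k / N := by
        rw [hintf]; exact Finset.sum_le_sum fun k _ => hint_le k
      have hgap : (∑ k ∈ Finset.range N, rk k / N) - (∑ k ∈ Finset.range N, rk (k + 1) / N)
          ≤ (μ univ).toReal / N := by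
        have e1 : (∑ k ∈ Finset.range N, rk k / N) - (∑ k ∈ Finset.range N, rk (k + 1) / N)
            = (rk 0 - rk N) / N := by
          rw [← Finset.sum_sub_distrib]
          rw [show (∑ k ∈ Finset.range N, (rk k / N - rk (k + 1) / N))
              = ∑ k ∈ Finset.range N, (rk k - rk (k + 1)) / N from
            Finset.sum_congr rfl fun k _ => by ring]
          rw [← Finset.sum_div, Finset.sum_range_sub' (fun k => rk k) N]
        rw [e1]
        have h0N : rk 0 ≤ (μ univ).toReal :=
          ENNReal.toReal_mono (measure_ne_top μ _) (measure_mono (subset_univ _))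
        have hNn : 0 ≤ rk N := ENNReal.toReal_nonneg
        exact (div_le_div_iff_of_pos_right hNR).2 (by linarith)
      exact abs_sub_le_iff.2 ⟨by linarith, by linarith⟩
    have htend : Tendsto (fun n : ℕ => (μ univ).toReal / n) atTop (𝓝 0) :=
      tendsto_const_div_atTop_nhds_zero_nat _
    have h0' : |lam f - ∫ x, f x ∂μ| ≤ 0 :=
      ge_of_tendsto htend (eventually_atTop.2 ⟨1, fun n hn => hdiff n hn⟩)
    have h1' : lam f - ∫ x, f x ∂μ = 0 := abs_eq_zero.1 (le_antisymm h0' (abs_nonneg _))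
    linarith
  -- Step 2 : general bounded continuous functions
  intro f
  by_cases hc : ‖f‖ = 0
  · have hf0 : f = 0 := norm_eq_zero.1 hc
    simp [hf0]
  · set c : ℝ := ‖f‖ with hcdef
    have hcpos : 0 < c := lt_of_le_of_ne (norm_nonneg f) (Ne.symm hc)
    set g : BoundedContinuousFunction Ω ℝ :=
      (2 * c)⁻¹ • (f + BoundedContinuousFunction.const Ω c) with hgdef
    have hgx : ∀ x, g x = (2 * c)⁻¹ * (f x + c) := by
      intro x; simp [hgdef]; ring
    have hfb : ∀ x, |f x| ≤ c := fun x => f.norm_coe_le_norm x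
    have hg0 : ∀ x, 0 ≤ g x := by
      intro x
      rw [hgx]
      have := abs_le.1 (hfb x)
      have h2c : (0 : ℝ) < (2 * c)⁻¹ := by positivity
      nlinarith
    have hg1 : ∀ x, g x ≤ 1 := by
      intro x
      rw [hgx]
      have := abs_le.1 (hfb x)
      rw [inv_mul_le_iff₀ (by positivity)]
      linarith
    have hkey := key g hg0 hg1
    have hone : lam (1 : BoundedContinuousFunction Ω ℝ) = (μ univ).toReal := by
      have := key (1 : BoundedContinuousFunction Ω ℝ) (fun x => by simp) (fun x => by simp)
      simpa [measureReal_def] using this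
    have hconst : (BoundedContinuousFunction.const Ω c : BoundedContinuousFunction Ω ℝ)
        = c • (1 : BoundedContinuousFunction Ω ℝ) := by
      ext x; simp
    have hlamg : lam g = (2 * c)⁻¹ * (lam f + c * (μ univ).toReal) := by
      rw [hgdef, _root_.map_smul, map_add, hconst, _root_.map_smul, hone, smul_eq_mul, smul_eq_mul]
    have hintg : ∫ x, g x ∂μ = (2 * c)⁻¹ * ((∫ x, f x ∂μ) + c * (μ univ).toReal) := by
      rw [show (∫ x, g x ∂μ) = ∫ x, (2 * c)⁻¹ * (f x + c) ∂μ from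
        integral_congr_ae (ae_of_all _ fun x => hgx x)]
      rw [integral_const_mul, integral_add (f.integrable μ) (integrable_const c),
        integral_const, smul_eq_mul, measureReal_def]
      ring
    rw [hlamg, hintg] at hkey
    have h2c : ((2 : ℝ) * c)⁻¹ ≠ 0 := by positivity
    have := mul_left_cancel₀ h2c hkey
    linarith

end DaniellAux

theorem daniell_stone_representation
    {Ω : Type*} [TopologicalSpace Ω] [PolishSpace Ω] [MeasurableSpace Ω] [BorelSpace Ω]
    (lam : BoundedContinuousFunction Ω ℝ →ₗ[ℝ] ℝ)
    (hpos : ∀ f : BoundedContinuousFunction Ω ℝ, (∀ x, 0 ≤ f x) → 0 ≤ lam f)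
    (hbelow : ∀ (f : ℕ → BoundedContinuousFunction Ω ℝ)
        (g : BoundedContinuousFunction Ω ℝ),
        (∀ n x, f n x ≤ f (n + 1) x) →
        (∀ x, Tendsto (fun n => f n x) atTop (𝓝 (g x))) →
        Tendsto (fun n => lam (f n)) atTop (𝓝 (lam g))) :
    ∃ μ : Measure Ω, IsFiniteMeasure μ ∧
      ∀ f : BoundedContinuousFunction Ω ℝ, lam f = ∫ x, f x ∂μ := by
  letI := TopologicalSpace.upgradeIsCompletelyMetrizable Ω
  exact DaniellAux.main lam hpos hbelow
end

section
/- Let Ω be a Polish space and U : C_b(Ω) → ℝ a convex monotone functional. Then U is continuous from above if and only if both U and the functional \bar{U}(f) := −U(−f) are continuous from below. -/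
open Filter Topology

theorem convex_above_iff_both_below
    {Ω : Type*} [TopologicalSpace Ω] [PolishSpace Ω]
    (U : BoundedContinuousFunction Ω ℝ → ℝ)
    (hconv : ConvexOn ℝ Set.univ U)
    (hmono : ∀ f g : BoundedContinuousFunction Ω ℝ, (∀ x, f x ≤ g x) → U f ≤ U g) :
    (∀ (f : ℕ → BoundedContinuousFunction Ω ℝ) (g : BoundedContinuousFunction Ω ℝ),
        (∀ n x, f (n + 1) x ≤ f n x) →
        (∀ x, Tendsto (fun n => f n x) atTop (𝓝 (g x))) →
        Tendsto (fun n => U (f n)) atTop (𝓝 (U g)))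
      ↔
    ((∀ (f : ℕ → BoundedContinuousFunction Ω ℝ) (g : BoundedContinuousFunction Ω ℝ),
        (∀ n x, f n x ≤ f (n + 1) x) →
        (∀ x, Tendsto (fun n => f n x) atTop (𝓝 (g x))) →
        Tendsto (fun n => U (f n)) atTop (𝓝 (U g))) ∧
      (∀ (f : ℕ → BoundedContinuousFunction Ω ℝ) (g : BoundedContinuousFunction Ω ℝ),
        (∀ n x, f n x ≤ f (n + 1) x) →
        (∀ x, Tendsto (fun n => f n x) atTop (𝓝 (g x))) →
        Tendsto (fun n => -U (-f n)) atTop (𝓝 (-U (-g))))) := by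
  constructor
  · intro habove
    constructor
    · -- continuity from below of U
      intro f g hincr hlim
      have hfx_mono : ∀ x, Monotone fun n => f n x := fun x =>
        monotone_nat_of_le_succ fun n => hincr n x
      have hfg : ∀ n x, f n x ≤ g x := fun n x =>
        Monotone.ge_of_tendsto (hfx_mono x) (hlim x) n
      have hUmono : Monotone fun n => U (f n) :=
        monotone_nat_of_le_succ fun n => hmono _ _ fun x => hincr n x
      have hbdd : BddAbove (Set.range fun n => U (f n)) :=
        ⟨U g, by rintro _ ⟨n, rfl⟩; exact hmono _ _ (hfg n)⟩
      have hL : Tendsto (fun n => U (f n)) atTop (𝓝 (⨆ n, U (f n))) :=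
        tendsto_atTop_ciSup hUmono hbdd
      set L := ⨆ n, U (f n) with hLdef
      set h : ℕ → BoundedContinuousFunction Ω ℝ := fun n => g + g - f n with hh
      have hhdec : ∀ n x, h (n + 1) x ≤ h n x := by
        intro n x
        simp only [hh, BoundedContinuousFunction.coe_sub, BoundedContinuousFunction.coe_add,
          Pi.sub_apply, Pi.add_apply]
        have := hincr n x
        linarith
      have hhlim : ∀ x, Tendsto (fun n => h n x) atTop (𝓝 (g x)) := by
        intro x
        have h1 : Tendsto (fun n => g x + g x - f n x) atTop (𝓝 (g x + g x - g x)) :=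
          Tendsto.sub tendsto_const_nhds (hlim x)
        simp only [add_sub_cancel_right] at h1
        simpa only [hh, BoundedContinuousFunction.coe_sub, BoundedContinuousFunction.coe_add,
          Pi.sub_apply, Pi.add_apply] using h1
      have hUh : Tendsto (fun n => U (h n)) atTop (𝓝 (U g)) := habove h g hhdec hhlim
      have key : ∀ n, U g ≤ (U (h n) + U (f n)) / 2 := by
        intro n
        have hc := hconv.2 (Set.mem_univ (h n)) (Set.mem_univ (f n))
          (by norm_num : (0:ℝ) ≤ 1/2) (by norm_num : (0:ℝ) ≤ 1/2) (by norm_num : (1/2:ℝ)+1/2=1)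
        have heq : (1/2 : ℝ) • h n + (1/2 : ℝ) • f n = g := by
          ext x
          simp only [hh, BoundedContinuousFunction.coe_add, BoundedContinuousFunction.coe_sub,
            BoundedContinuousFunction.coe_smul, Pi.add_apply, Pi.sub_apply, Pi.smul_apply,
            smul_eq_mul]
          ring
        rw [heq] at hc
        simp only [smul_eq_mul] at hc
        linarith
      have h2 : Tendsto (fun n => (U (h n) + U (f n)) / 2) atTop (𝓝 ((U g + L) / 2)) :=
        (hUh.add hL).div_const 2
      have hle : U g ≤ (U g + L) / 2 := ge_of_tendsto h2 (Eventually.of_forall key)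
      have hLle : L ≤ U g := ciSup_le fun n => hmono _ _ (hfg n)
      have hEq : L = U g := le_antisymm hLle (by linarith)
      rwa [hEq] at hL
    · -- continuity from below of Ū
      intro f g hincr hlim
      have h1 : Tendsto (fun n => U (-f n)) atTop (𝓝 (U (-g))) := by
        apply habove
        · intro n x
          simpa using hincr n x
        · intro x
          simpa using (hlim x).neg
      exact h1.neg
  · rintro ⟨_, hbar⟩ f g hdec hlim
    have h1 := hbar (fun n => -f n) (-g)
      (fun n x => by simpa using hdec n x)
      (fun x => by simpa using (hlim x).neg)
    have h2 := h1.neg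
    simpa using h2
end
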